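/- arXiv:2010.12889 — 3 statements merged into one kernel-verified Lean document; each statement's English description precedes it below -/
import Mathlib

section
/- Let M, J, K, D be positive definite n×n matrices and K_e, J_e symmetric positive definite matrices such that D_e = D K^{-1} K_e is symmetric positive definite. Define K_F = −J K^{-1}(K_e − K) M^{-1}, K_G = J K^{-1} K_e J_e^{-1} − K_F − I, K_H = J K^{-1} K_e J_e^{-1}. Then the flexible-joint robot dynamics M q̈ = −∇V(q) + K(θ−q) + D(θ̇−q̇) + τ_e, J θ̈ = −K(θ−q) − D(θ̇−q̇) + τ with control law τ = K_F τ_e − K_G (K(θ−q) + D(θ̇−q̇)) − K_F ∇V(q) + K_H τ_u, under the change of coordinates φ = K_e^{-1}(K_e−K)q + K_e^{-1}Kθ, is equivalent to the closed-loop dynamics M q̈ = −∇V(q) + K_e(φ−q) + D_e(φ̇−q̇) + τ_e, J_e φ̈ = −K_e(φ−q) − D_e(φ̇−q̇) + τ_u. -/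
open Matrix

/-- The flexible-joint robot dynamics with the impedance control law
τ = K_F τₑ − K_G τₐ − K_F ∇V(q) + K_H τᵤ is equivalent, under the coordinate
change φ = Kₑ⁻¹(Kₑ−K)q + Kₑ⁻¹Kθ, to the shaped closed-loop dynamics. -/
theorem impedance_control_linear_equiv
    {n : ℕ} (M J K D Ke Je : Matrix (Fin n) (Fin n) ℝ)
    [Invertible M] [Invertible J] [Invertible K] [Invertible Ke] [Invertible Je]
    (hM : M.PosDef) (hJ : J.PosDef) (hK : K.PosDef) (hD : D.PosDef)
    (hKe : Ke.PosDef) (hJe : Je.PosDef)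
    (hDe : (D * K⁻¹ * Ke).PosDef) (hDeSymm : (D * K⁻¹ * Ke).IsSymm)
    (V : (Fin n → ℝ) → ℝ) (gradV : (Fin n → ℝ) → Fin n → ℝ)
    (τe τu : ℝ → Fin n → ℝ)
    (q θ dq dθ ddq ddθ : ℝ → Fin n → ℝ)
    (hq : ∀ t, HasDerivAt q (dq t) t) (hdq : ∀ t, HasDerivAt dq (ddq t) t)
    (hθ : ∀ t, HasDerivAt θ (dθ t) t) (hdθ : ∀ t, HasDerivAt dθ (ddθ t) t) :
    -- controller gains
    (let KF : Matrix (Fin n) (Fin n) ℝ := -(J * K⁻¹ * (Ke - K) * M⁻¹)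
     let KG : Matrix (Fin n) (Fin n) ℝ := J * K⁻¹ * Ke * Je⁻¹ - KF - 1
     let KH : Matrix (Fin n) (Fin n) ℝ := J * K⁻¹ * Ke * Je⁻¹
     let De : Matrix (Fin n) (Fin n) ℝ := D * K⁻¹ * Ke
     -- joint torque and control law
     let τa : ℝ → Fin n → ℝ := fun t => K *ᵥ (θ t - q t) + D *ᵥ (dθ t - dq t)
     let τ : ℝ → Fin n → ℝ := fun t =>
       KF *ᵥ τe t - KG *ᵥ τa t - KF *ᵥ gradV (q t) + KH *ᵥ τu t
     -- coordinate change and its derivatives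
     let φ : ℝ → Fin n → ℝ := fun t => Ke⁻¹ *ᵥ ((Ke - K) *ᵥ q t + K *ᵥ θ t)
     let dφ : ℝ → Fin n → ℝ := fun t => Ke⁻¹ *ᵥ ((Ke - K) *ᵥ dq t + K *ᵥ dθ t)
     let ddφ : ℝ → Fin n → ℝ := fun t => Ke⁻¹ *ᵥ ((Ke - K) *ᵥ ddq t + K *ᵥ ddθ t)
     -- equivalence of open loop with control law and shaped closed loop
     (∀ t, M *ᵥ ddq t = -gradV (q t) + K *ᵥ (θ t - q t) + D *ᵥ (dθ t - dq t) + τe t ∧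
           J *ᵥ ddθ t = -(K *ᵥ (θ t - q t)) - D *ᵥ (dθ t - dq t) + τ t)
     ↔
     (∀ t, M *ᵥ ddq t = -gradV (q t) + Ke *ᵥ (φ t - q t) + De *ᵥ (dφ t - dq t) + τe t ∧
           Je *ᵥ ddφ t = -(Ke *ᵥ (φ t - q t)) - De *ᵥ (dφ t - dq t) + τu t)) := by
  intro KF KG KH De τa τ φ dφ ddφ
  haveI : Invertible Ke⁻¹ := Ke.invOf_eq_nonsing_inv ▸ invertibleInvOf
  haveI : Invertible J⁻¹ := J.invOf_eq_nonsing_inv ▸ invertibleInvOf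
  -- the coordinate change in difference form
  have hE : ∀ u v : Fin n → ℝ,
      Ke⁻¹ *ᵥ ((Ke - K) *ᵥ u + K *ᵥ v) - u = Ke⁻¹ *ᵥ (K *ᵥ (v - u)) := by
    intro u v
    have h1 : (Ke - K) *ᵥ u + K *ᵥ v = Ke *ᵥ u + K *ᵥ (v - u) := by
      simp only [Matrix.sub_mulVec, Matrix.mulVec_sub]; abel
    rw [h1, Matrix.mulVec_add, Matrix.mulVec_mulVec, Matrix.inv_mul_of_invertible,
      Matrix.one_mulVec]
    abel
  have hKeφ : ∀ t, Ke *ᵥ (φ t - q t) = K *ᵥ (θ t - q t) := by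
    intro t
    rw [show φ t - q t = Ke⁻¹ *ᵥ (K *ᵥ (θ t - q t)) from hE (q t) (θ t),
      Matrix.mulVec_mulVec, Matrix.mul_inv_of_invertible, Matrix.one_mulVec]
  have hDeφ : ∀ t, De *ᵥ (dφ t - dq t) = D *ᵥ (dθ t - dq t) := by
    intro t
    rw [show dφ t - dq t = Ke⁻¹ *ᵥ (K *ᵥ (dθ t - dq t)) from hE (dq t) (dθ t),
      Matrix.mulVec_mulVec, Matrix.mulVec_mulVec]
    have hDid : De * Ke⁻¹ * K = D := by
      show D * K⁻¹ * Ke * Ke⁻¹ * K = D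
      rw [Matrix.mul_inv_cancel_right_of_invertible, Matrix.inv_mul_cancel_right_of_invertible]
    rw [hDid]
  -- gain matrix identities
  set A : Matrix (Fin n) (Fin n) ℝ := Je * Ke⁻¹ * K * J⁻¹ with hAdef
  set C : Matrix (Fin n) (Fin n) ℝ := Je * Ke⁻¹ * (Ke - K) * M⁻¹ with hCdef
  haveI := invertibleMul Je Ke⁻¹
  haveI := invertibleMul (Je * Ke⁻¹) K
  haveI : Invertible A := hAdef ▸ invertibleMul (Je * Ke⁻¹ * K) J⁻¹
  have m1 : A * KF = -C := by
    show A * (-(J * K⁻¹ * (Ke - K) * M⁻¹)) = -C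
    rw [hAdef, hCdef]
    simp only [mul_neg, neg_inj, Matrix.mul_assoc,
      Matrix.inv_mul_cancel_left_of_invertible, Matrix.mul_inv_cancel_left_of_invertible]
  have m2 : A * (J * K⁻¹ * Ke * Je⁻¹) = 1 := by
    rw [hAdef]
    simp only [Matrix.mul_assoc, Matrix.inv_mul_cancel_left_of_invertible,
      Matrix.mul_inv_cancel_left_of_invertible, Matrix.mul_inv_of_invertible]
  have m3 : A * KG = 1 + C - A := by
    show A * ((J * K⁻¹ * Ke * Je⁻¹) - KF - 1) = 1 + C - A
    rw [Matrix.mul_sub, Matrix.mul_sub, Matrix.mul_one, m2, m1, sub_neg_eq_add]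
  have hAJ : A * J = Je * Ke⁻¹ * K := by
    rw [hAdef, Matrix.inv_mul_cancel_right_of_invertible]
  -- main pointwise equivalence
  refine forall_congr' fun t => ?_
  have hP : (-gradV (q t) + Ke *ᵥ (φ t - q t) + De *ᵥ (dφ t - dq t) + τe t)
      = (-gradV (q t) + K *ᵥ (θ t - q t) + D *ᵥ (dθ t - dq t) + τe t) := by
    rw [hKeφ, hDeφ]
  rw [hP]
  refine and_congr_right fun h1 => ?_
  -- abbreviations
  set x : Fin n → ℝ := θ t - q t with hx
  set y : Fin n → ℝ := dθ t - dq t with hy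
  set g : Fin n → ℝ := gradV (q t) with hg
  set e : Fin n → ℝ := τe t with he
  set u : Fin n → ℝ := τu t with hu
  set a : Fin n → ℝ := K *ᵥ x + D *ᵥ y with ha
  -- rewrite closed-loop torques
  have hclosed : -(Ke *ᵥ (φ t - q t)) - De *ᵥ (dφ t - dq t) + u = -a + u := by
    rw [hKeφ, hDeφ]; rw [ha]; abel
  have hMddq : M *ᵥ ddq t = -g + a + e := by rw [h1, ha]; abel
  have hCddq : (Je * Ke⁻¹ * (Ke - K)) *ᵥ ddq t = C *ᵥ (-g + a + e) := by
    rw [← hMddq, hCdef, Matrix.mulVec_mulVec, Matrix.inv_mul_cancel_right_of_invertible]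
  have hJeddφ : Je *ᵥ ddφ t
      = (Je * Ke⁻¹ * (Ke - K)) *ᵥ ddq t + A *ᵥ (J *ᵥ ddθ t) := by
    show Je *ᵥ (Ke⁻¹ *ᵥ ((Ke - K) *ᵥ ddq t + K *ᵥ ddθ t)) = _
    rw [Matrix.mulVec_mulVec, Matrix.mulVec_add, Matrix.mulVec_mulVec, Matrix.mulVec_mulVec,
      Matrix.mulVec_mulVec, hAJ, Matrix.mul_assoc]
  have hτ : τ t = KF *ᵥ e - KG *ᵥ a - KF *ᵥ g + KH *ᵥ u := rfl
  have hA : A *ᵥ (-a + τ t) = -a + u - C *ᵥ (-g + a + e) := by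
    rw [hτ]
    show A *ᵥ (-a + (KF *ᵥ e - KG *ᵥ a - KF *ᵥ g + (J * K⁻¹ * Ke * Je⁻¹) *ᵥ u)) = _
    simp only [Matrix.mulVec_add, Matrix.mulVec_sub, Matrix.mulVec_neg, Matrix.mulVec_mulVec,
      m1, m2, m3, Matrix.one_mulVec, Matrix.neg_mulVec, Matrix.add_mulVec, Matrix.sub_mulVec]
    abel
  have hopen : -(K *ᵥ x) - D *ᵥ y + τ t = -a + τ t := by rw [ha]; abel
  rw [hopen, hclosed]
  constructor
  · intro h2
    rw [hJeddφ, h2, hA, hCddq]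
    abel
  · intro h2
    have h4 : (Je * Ke⁻¹ * (Ke - K)) *ᵥ ddq t + A *ᵥ (J *ᵥ ddθ t) = -a + u := by
      rw [← hJeddφ, h2]
    have h3 : A *ᵥ (J *ᵥ ddθ t) = A *ᵥ (-a + τ t) := by
      rw [hA, eq_sub_iff_add_eq, add_comm, ← hCddq]
      exact h4
    exact A.mulVec_injective_of_invertible h3
end

section
/- For positive reals M, J_e, K_e, D_e, the rational function Y(s) = (J_e s² + D_e s + K_e) / (s[J_e M s² + D_e (J_e + M) s + K_e (J_e + M)]) is positive real: Re Y(s) ≥ 0 for all complex s with Re s > 0. -/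
/-!
Read as a mechanical network, `Y` is the admittance of the link mass `M s` in series with the
parallel combination of the motor inertia `Jₑ s` and the spring-damper `Dₑ + Kₑ / s`. Each of
these impedances has positive real part on `Re s > 0`, and that property is preserved by sums and
by inversion, since `Re z⁻¹ = Re z / |z|²`.
-/

namespace Complex

lemma inv_re_nonneg {z : ℂ} (hz : 0 ≤ z.re) : 0 ≤ z⁻¹.re := by
  rw [inv_re]
  exact div_nonneg hz (normSq_nonneg z)

lemma inv_re_pos {z : ℂ} (hz : 0 < z.re) : 0 < z⁻¹.re := by
  rw [inv_re]
  exact div_pos hz (normSq_pos.mpr (ne_zero_of_re_pos hz))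

lemma ofReal_mul_re_pos {c : ℝ} {z : ℂ} (hc : 0 < c) (hz : 0 < z.re) : 0 < (c * z).re := by
  rw [re_ofReal_mul]
  exact mul_pos hc hz

lemma ofReal_add_div_re_pos {d k : ℝ} {s : ℂ} (hd : 0 < d) (hk : 0 ≤ k) (hs : 0 < s.re) :
    0 < ((d : ℂ) + k / s).re := by
  rw [div_eq_mul_inv, add_re, ofReal_re, re_ofReal_mul]
  exact add_pos_of_pos_of_nonneg hd (mul_nonneg hk (inv_re_pos hs).le)

end Complex

lemma admittance_eq_ladder {𝕜 : Type*} [Field 𝕜] {m j d k s : 𝕜} (hs : s ≠ 0) (hj : j ≠ 0)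
    (hc : d + k / s ≠ 0) (hser : j * s + (d + k / s) ≠ 0) :
    (j * s ^ 2 + d * s + k) / (s * (j * m * s ^ 2 + d * (j + m) * s + k * (j + m))) =
      (m * s + ((j * s)⁻¹ + (d + k / s)⁻¹)⁻¹)⁻¹ := by
  have hN : j * s ^ 2 + d * s + k = s * (j * s + (d + k / s)) := by
    field_simp
    ring
  rw [inv_add_inv (mul_ne_zero hj hs) hc, inv_div, ← inv_div (s * _), hN,
    mul_div_mul_left _ _ hs, add_div' _ _ _ hser]
  congr 2
  field_simp
  ring

open Complex

/-- The closed-loop admittance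
Y(s) = (Jₑ s² + Dₑ s + Kₑ) / (s (Jₑ M s² + Dₑ(Jₑ+M) s + Kₑ(Jₑ+M)))
is positive real: Re Y(s) ≥ 0 whenever Re s > 0. -/
theorem admittance_positive_real
    (M Je Ke De : ℝ) (hM : 0 < M) (hJe : 0 < Je) (hKe : 0 < Ke) (hDe : 0 < De) :
    ∀ s : ℂ, 0 < s.re →
      0 ≤ (((Je : ℂ) * s ^ 2 + (De : ℂ) * s + (Ke : ℂ)) /
        (s * ((Je : ℂ) * (M : ℂ) * s ^ 2 + (De : ℂ) * ((Je : ℂ) + (M : ℂ)) * s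
          + (Ke : ℂ) * ((Je : ℂ) + (M : ℂ))))).re := by
  intro s hs
  have hinertia : 0 < ((Je : ℂ) * s).re := ofReal_mul_re_pos hJe hs
  have hspring : 0 < ((De : ℂ) + Ke / s).re := ofReal_add_div_re_pos hDe hKe.le hs
  have hser : 0 < ((Je : ℂ) * s + (De + Ke / s)).re := by
    rw [add_re]
    exact add_pos hinertia hspring
  have hpar : 0 < (((Je : ℂ) * s)⁻¹ + ((De : ℂ) + Ke / s)⁻¹)⁻¹.re := by
    refine inv_re_pos ?_
    rw [add_re]
    exact add_pos (inv_re_pos hinertia) (inv_re_pos hspring)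
  rw [admittance_eq_ladder (ne_zero_of_re_pos hs) (ofReal_ne_zero.mpr hJe.ne')
    (ne_zero_of_re_pos hspring) (ne_zero_of_re_pos hser)]
  refine inv_re_nonneg ?_
  rw [add_re]
  exact add_nonneg (ofReal_mul_re_pos hM hs).le hpar.le
end

section
/- If M, J, K, D > 0 are scalars and −1 < K_F < J/M, then with K_G = 0 the closed-loop system M q̈ = K_e(φ−q) + D_e(φ̇−q̇) + τ_e, J_e φ̈ = −K_e(φ−q) − D_e(φ̇−q̇) (with J_e, K_e, D_e defined by J_e = (J−K_F M)/(K_F+1), K_e = (K/J)(J−K_F M), D_e = (D/J)(J−K_F M)) is passive from τ_e to q̇ with storage function H = ½Mq̇² + ½J_eφ̇² + ½K_e(φ−q)²: Ḣ ≤ q̇ τ_e. -/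
/-!
Multiplying the first equation by `q̇`, the second by `φ̇` and adding, the spring
terms combine into the derivative of `½ Kₑ (φ - q)²`, so that `Ḣ = q̇ τₑ - Dₑ (φ̇ - q̇)²`.
The condition `K_F < J / M` makes the shaped damping `Dₑ = (D / J) (J - K_F M)` positive.
-/

theorem HasDerivAt.half_mul_sq {f : ℝ → ℝ} {f' t : ℝ} (c : ℝ) (hf : HasDerivAt f f' t) :
    HasDerivAt (fun s => 1 / 2 * c * f s ^ 2) (c * f t * f') t :=
  ((hf.pow 2).const_mul (1 / 2 * c)).congr_deriv (by ring)

theorem hasDerivAt_twoMassEnergy (m₁ m₂ k d u : ℝ) {q φ dq dφ ddq ddφ : ℝ → ℝ} {t : ℝ}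
    (hq : HasDerivAt q (dq t) t) (hdq : HasDerivAt dq (ddq t) t)
    (hφ : HasDerivAt φ (dφ t) t) (hdφ : HasDerivAt dφ (ddφ t) t)
    (h₁ : m₁ * ddq t = k * (φ t - q t) + d * (dφ t - dq t) + u)
    (h₂ : m₂ * ddφ t = -(k * (φ t - q t)) - d * (dφ t - dq t)) :
    HasDerivAt (fun t => 1 / 2 * m₁ * dq t ^ 2 + 1 / 2 * m₂ * dφ t ^ 2
        + 1 / 2 * k * (φ t - q t) ^ 2)
      (dq t * u - d * (dφ t - dq t) ^ 2) t := by
  have hH := ((hdq.half_mul_sq m₁).add (hdφ.half_mul_sq m₂)).add ((hφ.sub hq).half_mul_sq k)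
  refine hH.congr_deriv ?_
  rw [Pi.sub_apply]
  linear_combination dq t * h₁ + dφ t * h₂

theorem scalar_force_feedback_passive_general
    (M J K D KF : ℝ) (hM : 0 < M) (hJ : 0 < J) (hD : 0 < D)
    (hKF : -1 < KF ∧ KF < J / M)
    (τe : ℝ → ℝ)
    (q φ dq dφ ddq ddφ : ℝ → ℝ)
    (hq : ∀ t, HasDerivAt q (dq t) t) (hdq : ∀ t, HasDerivAt dq (ddq t) t)
    (hφ : ∀ t, HasDerivAt φ (dφ t) t) (hdφ : ∀ t, HasDerivAt dφ (ddφ t) t) :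
    (let Je := (J - KF * M) / (KF + 1)
     let Ke := (K / J) * (J - KF * M)
     let De := (D / J) * (J - KF * M)
     (∀ t, M * ddq t = Ke * (φ t - q t) + De * (dφ t - dq t) + τe t) →
     (∀ t, Je * ddφ t = -(Ke * (φ t - q t)) - De * (dφ t - dq t)) →
     ∀ t, ∃ h', HasDerivAt
       (fun t => (1/2) * M * (dq t) ^ 2 + (1/2) * Je * (dφ t) ^ 2
         + (1/2) * Ke * (φ t - q t) ^ 2) h' t ∧
       h' ≤ dq t * τe t) := by
  intro Je Ke De hq_eqn hφ_eqn t
  have hDe : 0 < De := mul_pos (div_pos hD hJ) (sub_pos.mpr ((lt_div_iff₀ hM).mp hKF.2))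
  exact ⟨_, hasDerivAt_twoMassEnergy M Je Ke De (τe t) (hq t) (hdq t) (hφ t) (hdφ t)
    (hq_eqn t) (hφ_eqn t), sub_le_self _ (mul_nonneg hDe.le (sq_nonneg _))⟩

/-- Scalar classical impedance control (K_G = 0, force feedback τ = K_F τₑ):
if −1 < K_F < J/M then the shaped closed loop is passive from τₑ to q̇ with
storage function H = ½Mq̇² + ½Jₑφ̇² + ½Kₑ(φ−q)². -/
theorem scalar_force_feedback_passive
    (M J K D KF : ℝ) (hM : 0 < M) (hJ : 0 < J) (hK : 0 < K) (hD : 0 < D)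
    (hKF : -1 < KF ∧ KF < J / M)
    (τe : ℝ → ℝ)
    (q φ dq dφ ddq ddφ : ℝ → ℝ)
    (hq : ∀ t, HasDerivAt q (dq t) t) (hdq : ∀ t, HasDerivAt dq (ddq t) t)
    (hφ : ∀ t, HasDerivAt φ (dφ t) t) (hdφ : ∀ t, HasDerivAt dφ (ddφ t) t) :
    (let Je := (J - KF * M) / (KF + 1)
     let Ke := (K / J) * (J - KF * M)
     let De := (D / J) * (J - KF * M)
     (∀ t, M * ddq t = Ke * (φ t - q t) + De * (dφ t - dq t) + τe t) →
     (∀ t, Je * ddφ t = -(Ke * (φ t - q t)) - De * (dφ t - dq t)) →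
     ∀ t, ∃ h', HasDerivAt
       (fun t => (1/2) * M * (dq t) ^ 2 + (1/2) * Je * (dφ t) ^ 2
         + (1/2) * Ke * (φ t - q t) ^ 2) h' t ∧
       h' ≤ dq t * τe t) :=
  scalar_force_feedback_passive_general M J K D KF hM hJ hD hKF τe q φ dq dφ ddq ddφ hq hdq hφ hdφ
end
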